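/- Let S be a torsor under a connected smooth group scheme P over a finite field 𝔽_q (i.e. a P-torsor over Spec 𝔽_q). Then S is trivial; in particular S(𝔽_q) ≠ ∅ (Lang's theorem consequence). -/
import Mathlib

/-! Statement 14 (Lang): a torsor under a connected smooth group scheme `P`
over `𝔽_q` is trivial, i.e. has a rational point.

Model (Galois-descent form): `P` is the group of `𝔽̄_q`-points with the
Frobenius automorphism `φ`; Lang's theorem says the map `g ↦ g⁻¹·φ(g)` is
surjective (hypothesis `hlang`, which holds for connected smooth groups).
A torsor is a nonempty set `S` with a simply transitive `P`-action and a
compatible Frobenius `φS`; a rational point of `S` is a fixed point of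
`φS`. -/

theorem lang_torsor_trivial {P S : Type*} [Group P] [MulAction P S]
    (hS : Nonempty S)
    (hfree : ∀ (p : P) (s : S), p • s = s → p = 1)
    (htrans : ∀ s t : S, ∃ p : P, p • s = t)
    (φ : P ≃* P) (φS : S ≃ S)
    (hcompat : ∀ (p : P) (s : S), φS (p • s) = φ p • φS s)
    (hlang : ∀ h : P, ∃ g : P, g⁻¹ * φ g = h) :
    ∃ s : S, φS s = s := by
  obtain ⟨s₀⟩ := hS
  obtain ⟨h, hh⟩ := htrans s₀ (φS s₀)
  obtain ⟨g, hg⟩ := hlang h⁻¹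
  refine ⟨g • s₀, ?_⟩
  have : φ g = g * h⁻¹ := by
    rw [← hg]; group
  rw [hcompat, ← hh, smul_smul, this]
  group
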